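/- arXiv:cs/0108010 — 2 statements merged into one kernel-verified Lean document; each statement's English description precedes it below -/
import Mathlib

section
/- Let r, c ∈ ℕ^n be row and column projection vectors for placements of 1×1 cells in an n×n grid (a placement is a subset T ⊆ (Fin n × Fin n), with r_i = |{j : (i,j) ∈ T}| and c_j = |{i : (i,j) ∈ T}|). Let I ⊆ Fin n be a set of rows and J ⊆ Fin n a set of columns. If ∑_{i∈I} r_i − ∑_{j∉J} c_j = |I| · |J|, then every placement T with projections (r,c) satisfies: I × J ⊆ T and T ∩ ((Fin n \ I) × (Fin n \ J)) = ∅. -/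
/-!
Split the cells of `T` in the rows `I` by whether their column lies in `J`, and the cells in the
columns `Jᶜ` by whether their row lies in `I`. The cells of `T` in `I × Jᶜ` are counted on both
sides, so the hypothesis reads `#(T ∩ I × J) - #(T ∩ Iᶜ × Jᶜ) = #I * #J`. As the first term is at
most `#I * #J` and the second is nonnegative, `T` fills `I × J` and misses `Iᶜ × Jᶜ`.
-/

open Finset

namespace Finset

variable {α β : Type*} [DecidableEq α] [DecidableEq β]

theorem card_filter_fst_mem_eq_add [Fintype β] (T : Finset (α × β)) (I : Finset α) (J : Finset β) :
    #{p ∈ T | p.1 ∈ I} = #(T ∩ I ×ˢ J) + #(T ∩ I ×ˢ Jᶜ) := by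
  rw [← card_filter_add_card_filter_not (p := fun p => p.2 ∈ J)]
  congr 2 <;> ext p <;> simp [and_assoc]

theorem card_filter_snd_mem_eq_add [Fintype α] (T : Finset (α × β)) (I : Finset α) (J : Finset β) :
    #{p ∈ T | p.2 ∈ J} = #(T ∩ I ×ˢ J) + #(T ∩ Iᶜ ×ˢ J) := by
  rw [← card_filter_add_card_filter_not (p := fun p => p.1 ∈ I)]
  congr 2 <;> ext p <;> simp [and_comm, and_assoc]

end Finset

theorem stmt_0 (n : ℕ) (T : Finset (Fin n × Fin n)) (r c : Fin n → ℕ)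
    (hr : ∀ i, r i = (T.filter (fun p => p.1 = i)).card)
    (hc : ∀ j, c j = (T.filter (fun p => p.2 = j)).card)
    (I J : Finset (Fin n))
    (h : (∑ i ∈ I, (r i : ℤ)) - ∑ j ∈ Jᶜ, (c j : ℤ) = (I.card : ℤ) * (J.card : ℤ)) :
    (∀ i ∈ I, ∀ j ∈ J, (i, j) ∈ T) ∧ (∀ i ∈ Iᶜ, ∀ j ∈ Jᶜ, (i, j) ∉ T) := by
  have hrow : ∑ i ∈ I, r i = #(T ∩ I ×ˢ J) + #(T ∩ I ×ˢ Jᶜ) := by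
    simp_rw [hr]
    rw [sum_card_fiberwise_eq_card_filter, card_filter_fst_mem_eq_add]
  have hcol : ∑ j ∈ Jᶜ, c j = #(T ∩ I ×ˢ Jᶜ) + #(T ∩ Iᶜ ×ˢ Jᶜ) := by
    simp_rw [hc]
    rw [sum_card_fiberwise_eq_card_filter, card_filter_snd_mem_eq_add]
  have hle : #(T ∩ I ×ˢ J) ≤ #(I ×ˢ J) := card_le_card inter_subset_right
  have hfull : #(T ∩ I ×ˢ J) = #(I ×ˢ J) ∧ #(T ∩ Iᶜ ×ˢ Jᶜ) = 0 := by
    rw [card_product] at hle ⊢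
    rw [← Nat.cast_sum, ← Nat.cast_sum, hrow, hcol] at h
    push_cast at h
    omega
  have hsub : I ×ˢ J ⊆ T :=
    inter_eq_right.mp (eq_of_subset_of_card_le inter_subset_right hfull.1.ge)
  have hdisj : T ∩ Iᶜ ×ˢ Jᶜ = ∅ := card_eq_zero.mp hfull.2
  exact ⟨fun i hi j hj => hsub (mk_mem_product hi hj), fun i hi j hj hij =>
    eq_empty_iff_forall_notMem.mp hdisj _ (mem_inter.mpr ⟨hij, mk_mem_product hi hj⟩)⟩
end

section
/- Let 𝒯 = {t_1, …, t_h} be a finite set of tiles, each containing its center (0,0). For each tile t_k define the cell-projection map taking the single placement (i,j,k) to the pair of vectors counting, for each row and column, the number of cells of (i,j)+t_k in that row/column; similarly define the center-projection map counting centers. The map sending the single-tile center projection of (i,j,k) to its single-tile cell projection extends to a well-defined bijection between the set of all center projections of 𝒯-tilings of the n×n grid and the set of all cell projections of 𝒯-tilings, i.e., two 𝒯-tilings have equal center projections if and only if they have equal cell projections. -/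
/-- The set of cells covered by the placement `p = (i, j, k)`. -/
def tileCells {h : ℕ} (tiles : Fin h → Finset (ℤ × ℤ)) (p : ℤ × ℤ × Fin h) :
    Finset (ℤ × ℤ) :=
  (tiles p.2.2).image (fun c => (p.1 + c.1, p.2.1 + c.2))

/-- `T` is a `𝒯`-tiling of the `n × n` grid. -/
def IsTiling (n : ℕ) {h : ℕ} (tiles : Fin h → Finset (ℤ × ℤ))
    (T : Finset (ℤ × ℤ × Fin h)) : Prop :=
  (∀ p ∈ T, tileCells tiles p ⊆ Finset.Icc 0 ((n : ℤ) - 1) ×ˢ Finset.Icc 0 ((n : ℤ) - 1)) ∧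
  ∀ p ∈ T, ∀ q ∈ T, p ≠ q → Disjoint (tileCells tiles p) (tileCells tiles q)

/-- Center row projection: the number of tiles of type `k` centered in row `i`. -/
def rowProj {h : ℕ} (T : Finset (ℤ × ℤ × Fin h)) (i : ℤ) (k : Fin h) : ℕ :=
  (T.filter (fun p => p.1 = i ∧ p.2.2 = k)).card

/-- Center column projection. -/
def colProj {h : ℕ} (T : Finset (ℤ × ℤ × Fin h)) (j : ℤ) (k : Fin h) : ℕ :=
  (T.filter (fun p => p.2.1 = j ∧ p.2.2 = k)).card

/-- Cell row projection: the number of cells in row `i` covered by tiles of type `k`. -/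
def cellRowProj {h : ℕ} (tiles : Fin h → Finset (ℤ × ℤ))
    (T : Finset (ℤ × ℤ × Fin h)) (i : ℤ) (k : Fin h) : ℕ :=
  ∑ p ∈ T.filter (fun p => p.2.2 = k), ((tileCells tiles p).filter (fun c => c.1 = i)).card

/-- Cell column projection: the number of cells in column `j` covered by tiles of type `k`. -/
def cellColProj {h : ℕ} (tiles : Fin h → Finset (ℤ × ℤ))
    (T : Finset (ℤ × ℤ × Fin h)) (j : ℤ) (k : Fin h) : ℕ :=
  ∑ p ∈ T.filter (fun p => p.2.2 = k), ((tileCells tiles p).filter (fun c => c.2 = j)).card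

/- ### Auxiliary general development, parametric in a coordinate projection `π` -/

def gW {h : ℕ} (tiles : Fin h → Finset (ℤ × ℤ)) (π : ℤ × ℤ → ℤ) (k : Fin h) (d : ℤ) : ℕ :=
  ((tiles k).filter (fun c => π c = d)).card

def gProj {h : ℕ} (π : ℤ × ℤ → ℤ) (T : Finset (ℤ × ℤ × Fin h)) (i : ℤ) (k : Fin h) : ℕ :=
  (T.filter (fun p => π (p.1, p.2.1) = i ∧ p.2.2 = k)).card

def gCell {h : ℕ} (tiles : Fin h → Finset (ℤ × ℤ)) (π : ℤ × ℤ → ℤ)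
    (T : Finset (ℤ × ℤ × Fin h)) (i : ℤ) (k : Fin h) : ℕ :=
  ∑ p ∈ T.filter (fun p => p.2.2 = k), ((tileCells tiles p).filter (fun c => π c = i)).card

lemma cell_card {h : ℕ} (tiles : Fin h → Finset (ℤ × ℤ)) (π : ℤ × ℤ → ℤ)
    (hπ : ∀ x y : ℤ × ℤ, π (x.1 + y.1, x.2 + y.2) = π x + π y)
    (p : ℤ × ℤ × Fin h) (i : ℤ) :
    ((tileCells tiles p).filter (fun c => π c = i)).card
      = gW tiles π p.2.2 (i - π (p.1, p.2.1)) := by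
  have hinj : Function.Injective (fun c : ℤ × ℤ => (p.1 + c.1, p.2.1 + c.2)) := by
    intro a b hab
    simp only [Prod.mk.injEq] at hab
    exact Prod.ext (by omega) (by omega)
  unfold tileCells gW
  rw [Finset.filter_image, Finset.card_image_of_injective _ hinj]
  congr 1
  apply Finset.filter_congr
  intro c _
  have := hπ (p.1, p.2.1) c
  simp only at this ⊢
  rw [this]
  omega

lemma sum_fiber {h : ℕ} (π : ℤ × ℤ → ℤ) (T : Finset (ℤ × ℤ × Fin h))
    (S : Finset ℤ) (k : Fin h) (g : ℤ → ℕ)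
    (hS : ∀ p ∈ T.filter (fun p => p.2.2 = k), π (p.1, p.2.1) ∈ S) :
    ∑ p ∈ T.filter (fun p => p.2.2 = k), g (π (p.1, p.2.1)) =
      ∑ x ∈ S, gProj π T x k * g x := by
  rw [← Finset.sum_fiberwise_of_maps_to hS]
  apply Finset.sum_congr rfl
  intro x _
  rw [Finset.sum_congr rfl (fun p hp => by
    rw [(Finset.mem_filter.mp hp).2]), Finset.sum_const, smul_eq_mul]
  unfold gProj
  congr 1
  rw [Finset.filter_filter]
  congr 1
  ext p
  simp [and_comm]

lemma gCell_eq {h : ℕ} (tiles : Fin h → Finset (ℤ × ℤ)) (π : ℤ × ℤ → ℤ)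
    (hπ : ∀ x y : ℤ × ℤ, π (x.1 + y.1, x.2 + y.2) = π x + π y)
    (T : Finset (ℤ × ℤ × Fin h)) (S : Finset ℤ) (k : Fin h)
    (hS : ∀ p ∈ T.filter (fun p => p.2.2 = k), π (p.1, p.2.1) ∈ S) (i : ℤ) :
    gCell tiles π T i k = ∑ x ∈ S, gProj π T x k * gW tiles π k (i - x) := by
  unfold gCell
  rw [Finset.sum_congr rfl (fun p hp => by
    rw [cell_card tiles π hπ p i, (Finset.mem_filter.mp hp).2])]
  exact sum_fiber π T S k (fun x => gW tiles π k (i - x)) hS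

lemma gProj_neg {h : ℕ} (π : ℤ × ℤ → ℤ) (T : Finset (ℤ × ℤ × Fin h))
    (hpos : ∀ p ∈ T, 0 ≤ π (p.1, p.2.1)) (i : ℤ) (hi : i < 0) (k : Fin h) :
    gProj π T i k = 0 := by
  unfold gProj
  rw [Finset.card_eq_zero, Finset.filter_eq_empty_iff]
  intro p hp
  have := hpos p hp
  intro ⟨h1, _⟩
  omega

lemma gen_main {h : ℕ} (tiles : Fin h → Finset (ℤ × ℤ)) (π : ℤ × ℤ → ℤ)
    (hπ : ∀ x y : ℤ × ℤ, π (x.1 + y.1, x.2 + y.2) = π x + π y)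
    (hw0 : ∀ k, 0 < gW tiles π k 0)
    (hwneg : ∀ k d, d < 0 → gW tiles π k d = 0)
    (T T' : Finset (ℤ × ℤ × Fin h))
    (hp : ∀ p ∈ T, 0 ≤ π (p.1, p.2.1)) (hp' : ∀ p ∈ T', 0 ≤ π (p.1, p.2.1)) :
    (∀ i k, gProj π T i k = gProj π T' i k) ↔
      (∀ i k, gCell tiles π T i k = gCell tiles π T' i k) := by
  constructor
  · intro heq i k
    set S := (T.filter (fun p => p.2.2 = k)).image (fun p => π (p.1, p.2.1)) ∪
      (T'.filter (fun p => p.2.2 = k)).image (fun p => π (p.1, p.2.1)) with hSdef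
    rw [gCell_eq tiles π hπ T S k (fun p hp => Finset.mem_union_left _
      (Finset.mem_image_of_mem _ hp)) i,
      gCell_eq tiles π hπ T' S k (fun p hp => Finset.mem_union_right _
      (Finset.mem_image_of_mem _ hp)) i]
    exact Finset.sum_congr rfl (fun x _ => by rw [heq x k])
  · intro heq i k
    have key : ∀ m : ℕ, ∀ i : ℤ, i < m → gProj π T i k = gProj π T' i k := by
      intro m
      induction m using Nat.strong_induction_on with
      | _ m ih =>
        intro i him
        rcases lt_or_ge i 0 with hi | hi
        · rw [gProj_neg π T hp i hi k, gProj_neg π T' hp' i hi k]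
        · set S := ((T.filter (fun p => p.2.2 = k)).image (fun p => π (p.1, p.2.1)) ∪
            (T'.filter (fun p => p.2.2 = k)).image (fun p => π (p.1, p.2.1))) ∪ {i} with hSdef
          have hiS : i ∈ S := by simp [hSdef]
          have e1 := gCell_eq tiles π hπ T S k (fun p hp => Finset.mem_union_left _
            (Finset.mem_union_left _ (Finset.mem_image_of_mem _ hp))) i
          have e2 := gCell_eq tiles π hπ T' S k (fun p hp => Finset.mem_union_left _
            (Finset.mem_union_right _ (Finset.mem_image_of_mem _ hp))) i
          have hsplit : ∀ (U : Finset (ℤ × ℤ × Fin h)),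
            ∑ x ∈ S, gProj π U x k * gW tiles π k (i - x)
              = gProj π U i k * gW tiles π k 0 +
                ∑ x ∈ S.erase i, gProj π U x k * gW tiles π k (i - x) := by
            intro U
            rw [← Finset.add_sum_erase S _ hiS, sub_self]
          have hrest : ∑ x ∈ S.erase i, gProj π T x k * gW tiles π k (i - x)
              = ∑ x ∈ S.erase i, gProj π T' x k * gW tiles π k (i - x) := by
            apply Finset.sum_congr rfl
            intro x hx
            have hxne : x ≠ i := Finset.ne_of_mem_erase hx
            rcases lt_or_ge x i with hlt | hge
            · have hx' : x < (i.toNat : ℤ) := by omega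
              have hm : i.toNat < m := by omega
              rw [ih i.toNat hm x hx']
            · have hneg : i - x < 0 := by omega
              rw [hwneg k _ hneg, mul_zero, mul_zero]
          have hh := heq i k
          rw [e1, e2, hsplit T, hsplit T', hrest] at hh
          have hcancel : gProj π T i k * gW tiles π k 0 = gProj π T' i k * gW tiles π k 0 := by
            omega
          exact Nat.eq_of_mul_eq_mul_right (hw0 k) hcancel
    exact key (i.toNat + 1) i (by omega)

lemma center_in_grid {n h : ℕ} (tiles : Fin h → Finset (ℤ × ℤ))
    (hcenter : ∀ k, (0, 0) ∈ tiles k) (T : Finset (ℤ × ℤ × Fin h))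
    (hT : IsTiling n tiles T) (p : ℤ × ℤ × Fin h) (hp : p ∈ T) :
    0 ≤ p.1 ∧ 0 ≤ p.2.1 := by
  have hm : (p.1, p.2.1) ∈ tileCells tiles p := by
    refine Finset.mem_image.mpr ⟨(0, 0), hcenter _, by simp⟩
  have := hT.1 p hp hm
  simp only [Finset.mem_product, Finset.mem_Icc] at this
  exact ⟨this.1.1, this.2.1⟩

/-- Two `𝒯`-tilings have equal center projections iff they have equal cell
projections (tiles have their center `(0,0)` at the upper-left corner). -/
theorem stmt_9 (n h : ℕ) (tiles : Fin h → Finset (ℤ × ℤ))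
    (hcenter : ∀ k, (0, 0) ∈ tiles k)
    (hcorner : ∀ k, ∀ c ∈ tiles k, 0 ≤ c.1 ∧ 0 ≤ c.2)
    (T T' : Finset (ℤ × ℤ × Fin h))
    (hT : IsTiling n tiles T) (hT' : IsTiling n tiles T') :
    ((∀ i k, rowProj T i k = rowProj T' i k) ∧ (∀ j k, colProj T j k = colProj T' j k)) ↔
    ((∀ i k, cellRowProj tiles T i k = cellRowProj tiles T' i k) ∧
      (∀ j k, cellColProj tiles T j k = cellColProj tiles T' j k)) := by
  have hrow := gen_main tiles (fun c => c.1) (fun _ _ => rfl)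
    (fun k => Finset.card_pos.mpr ⟨(0, 0), Finset.mem_filter.mpr ⟨hcenter k, rfl⟩⟩)
    (fun k d hd => by
      rw [gW, Finset.card_eq_zero, Finset.filter_eq_empty_iff]
      intro c hc hcd
      have := (hcorner k c hc).1
      have hcd' : c.1 = d := hcd
      omega)
    T T'
    (fun p hp => (center_in_grid tiles hcenter T hT p hp).1)
    (fun p hp => (center_in_grid tiles hcenter T' hT' p hp).1)
  have hcol := gen_main tiles (fun c => c.2) (fun _ _ => rfl)
    (fun k => Finset.card_pos.mpr ⟨(0, 0), Finset.mem_filter.mpr ⟨hcenter k, rfl⟩⟩)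
    (fun k d hd => by
      rw [gW, Finset.card_eq_zero, Finset.filter_eq_empty_iff]
      intro c hc hcd
      have := (hcorner k c hc).2
      have hcd' : c.2 = d := hcd
      omega)
    T T'
    (fun p hp => (center_in_grid tiles hcenter T hT p hp).2)
    (fun p hp => (center_in_grid tiles hcenter T' hT' p hp).2)
  exact and_congr hrow hcol
end
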